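/- arXiv:1109.1779 — 2 statements merged into one kernel-verified Lean document; each statement's English description precedes it below -/
import Mathlib

section
/- If a state σ_{AB} on C^{d_A}⊗C^{d_B} is k-extendible on Bob's side, then teleportation gives the cloning bound: on two qubits, the maximal overlap tr(σΦ⁺) of a k-extendible state σ with the maximally entangled state is (k+2)/(2(k+1)). In particular, for k=1 the maximum is 3/4. -/
open Matrix ComplexOrder

/-- Projector onto the maximally entangled state on `ℂ^d ⊗ ℂ^d`. -/
noncomputable def phiPlus (d : ℕ) : Matrix (Fin d × Fin d) (Fin d × Fin d) ℂ :=
  Matrix.of fun p q => if p.1 = p.2 ∧ q.1 = q.2 then (1 / d : ℂ) else 0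

/-- Reduction of a state on `A ⊗ B^{⊗(k+1)}` to `A` and the `i`-th copy of `B`. -/
noncomputable def red {α β : Type*} [Fintype α] [Fintype β] [DecidableEq β] (k : ℕ)
    (σ : Matrix (α × (Fin (k + 1) → β)) (α × (Fin (k + 1) → β)) ℂ) (i : Fin (k + 1)) :
    Matrix (α × β) (α × β) ℂ :=
  Matrix.of fun p q =>
    ((Fintype.card β : ℂ))⁻¹ *
      ∑ f : Fin (k + 1) → β,
        σ (p.1, Function.update f i p.2) (q.1, Function.update f i q.2)

/-- `k`-extendibility on the second system. -/
noncomputable def kExtendible {α β : Type*} [Fintype α] [Fintype β] [DecidableEq β]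
    (k : ℕ) (σ : Matrix (α × β) (α × β) ℂ) : Prop :=
  ∃ σ' : Matrix (α × (Fin (k + 1) → β)) (α × (Fin (k + 1) → β)) ℂ,
    σ'.PosSemidef ∧ σ'.trace = 1 ∧ ∀ i, red k σ' i = σ

/-!
Write a `k`-extension `σ'` as a sum of rank-one terms `|x⟩⟨x|`. The reduction of `|x⟩⟨x|` to
`A` and the `i`-th copy of `B` has overlap `d⁻² ∑_f |⟨Φ_{i,f}|x⟩|²` with `Φ⁺`, where `Φ_{i,f}` is
the unnormalised maximally entangled vector between `A` and copy `i`, tensored with the basis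
vector `f` on the other copies. As all reductions of `σ'` agree, `k + 1` times the overlap is
`d⁻² ∑_{i,f} |⟨Φ_{i,f}|x⟩|²`, summed over the terms. By the Schur test this is at most
`d⁻² (d (d + k))`, as the Gram matrix of the `Φ_{i,f}` is entrywise nonnegative with all
row sums equal to `d (d + k)`. The bound `(d + k) / (d (k + 1))` is attained by the reductions of the
permutation-symmetric pure state `∑_i Φ⁺_{A B_i} ⊗ |0…0⟩`; for qubits it is
`(k + 2) / (2 (k + 1))`.
-/

section UpdateSums

variable {ι β M : Type*} [Fintype ι] [DecidableEq ι] [Fintype β] [DecidableEq β]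
  [AddCommMonoid M]

theorem Fintype.sum_update_eq_card_smul (g : (ι → β) → M) (i : ι) (t : β) :
    ∑ f, g (Function.update f i t) = Fintype.card β • ∑ f, if f i = t then g f else 0 := by
  have hinv : Function.Involutive fun p : β × (ι → β) => (p.2 i, Function.update p.2 i p.1) := by
    rintro ⟨s, f⟩
    simp
  calc ∑ f, g (Function.update f i t)
      = ∑ p : β × (ι → β), if p.1 = t then g (Function.update p.2 i p.1) else 0 := by
        simp [Fintype.sum_prod_type]
    _ = ∑ p : β × (ι → β), if p.2 i = t then g p.2 else 0 :=
        Fintype.sum_bijective _ hinv.bijective _ _ fun p => by simp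
    _ = Fintype.card β • ∑ f, if f i = t then g f else 0 := by
        simp [Fintype.sum_prod_type]

theorem Fintype.sum_sum_update (g : (ι → β) → M) (i : ι) :
    ∑ t, ∑ f, g (Function.update f i t) = Fintype.card β • ∑ f, g f := by
  simp_rw [Fintype.sum_update_eq_card_smul, ← Finset.smul_sum]
  rw [Finset.sum_comm]
  simp

end UpdateSums

theorem Pi.single_eq_single_iff {ι M : Type*} [DecidableEq ι] [Zero M] {i j : ι} {a : M} :
    (Pi.single i a : ι → M) = Pi.single j a ↔ i = j ∨ a = 0 := by
  refine ⟨fun h => or_iff_not_imp_left.mpr fun hij => ?_, ?_⟩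
  · simpa [hij] using congrFun h i
  · rintro (rfl | rfl) <;> simp

theorem Fin.sum_ite_eq_add_mul {k : ℕ} (i : Fin (k + 1)) (x y : ℝ) :
    ∑ j, (if j = i then x else y) = x + k * y := by
  simp [Finset.sum_ite, Finset.filter_ne', Finset.filter_eq']

namespace Matrix

variable {ι κ : Type*} [Fintype ι] [Fintype κ]

theorem dotProduct_mulVec_le_of_sum_le {G : Matrix ι ι ℝ} (hG : G.IsSymm)
    (hG₀ : ∀ a b, 0 ≤ G a b) {R : ℝ} (hR : ∀ a, ∑ b, G a b ≤ R) (t : ι → ℝ) :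
    t ⬝ᵥ G *ᵥ t ≤ R * (t ⬝ᵥ t) := by
  have hswap : ∑ a, ∑ b, G a b * t b ^ 2 = ∑ a, ∑ b, G a b * t a ^ 2 := by
    rw [Finset.sum_comm]
    exact Finset.sum_congr rfl fun a _ => Finset.sum_congr rfl fun b _ => by
      rw [hG.apply b a]
  calc t ⬝ᵥ G *ᵥ t = ∑ a, ∑ b, G a b * (t a * t b) := by
        simp only [dotProduct, mulVec, Finset.mul_sum]
        exact Finset.sum_congr rfl fun a _ => Finset.sum_congr rfl fun b _ => by ring
    _ ≤ ∑ a, ∑ b, G a b * ((t a ^ 2 + t b ^ 2) / 2) := by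
        gcongr with a _ b _
        · exact hG₀ a b
        · nlinarith [sq_nonneg (t a - t b)]
    _ = (∑ a, ∑ b, G a b * t a ^ 2 + ∑ a, ∑ b, G a b * t b ^ 2) / 2 := by
        simp only [← Finset.sum_add_distrib, Finset.sum_div]
        exact Finset.sum_congr rfl fun a _ => Finset.sum_congr rfl fun b _ => by ring
    _ = ∑ a, (∑ b, G a b) * t a ^ 2 := by
        rw [hswap, add_self_div_two]
        simp only [Finset.sum_mul]
    _ ≤ ∑ a, R * t a ^ 2 := by
        gcongr with a
        exact hR a
    _ = R * (t ⬝ᵥ t) := by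
        simp [dotProduct, Finset.mul_sum, sq]

theorem mulVec_dotProduct_mulVec_le {V : Matrix κ ι ℝ} (hV₀ : ∀ a b, 0 ≤ (V * Vᵀ) a b)
    {R : ℝ} (hR₀ : 0 ≤ R) (hR : ∀ a, ∑ b, (V * Vᵀ) a b ≤ R) (w : ι → ℝ) :
    V *ᵥ w ⬝ᵥ V *ᵥ w ≤ R * (w ⬝ᵥ w) := by
  have hS₀ : 0 ≤ V *ᵥ w ⬝ᵥ V *ᵥ w := Finset.sum_nonneg fun _ _ => mul_self_nonneg _
  have hw₀ : 0 ≤ w ⬝ᵥ w := Finset.sum_nonneg fun _ _ => mul_self_nonneg _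
  have hS : V *ᵥ w ⬝ᵥ V *ᵥ w = Vᵀ *ᵥ (V *ᵥ w) ⬝ᵥ w := by
    rw [mulVec_transpose, ← dotProduct_mulVec]
  have hCS : (V *ᵥ w ⬝ᵥ V *ᵥ w) ^ 2 ≤ (Vᵀ *ᵥ (V *ᵥ w) ⬝ᵥ Vᵀ *ᵥ (V *ᵥ w)) * (w ⬝ᵥ w) := by
    rw [hS]
    simpa only [dotProduct, sq] using
      Finset.sum_mul_sq_le_sq_mul_sq Finset.univ (Vᵀ *ᵥ (V *ᵥ w)) w
  have hGram : Vᵀ *ᵥ (V *ᵥ w) ⬝ᵥ Vᵀ *ᵥ (V *ᵥ w) ≤ R * (V *ᵥ w ⬝ᵥ V *ᵥ w) := by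
    nth_rewrite 1 [mulVec_transpose]
    rw [← dotProduct_mulVec, mulVec_mulVec]
    have hsymm : (V * Vᵀ).IsSymm := by rw [IsSymm, transpose_mul, transpose_transpose]
    exact dotProduct_mulVec_le_of_sum_le hsymm hV₀ hR _
  rcases hS₀.eq_or_lt with h | h
  · rw [← h]; positivity
  · nlinarith [mul_le_mul_of_nonneg_right hGram hw₀]

end Matrix

section Reduction

variable {α β : Type*} [Fintype α] [Fintype β] [DecidableEq β] {k : ℕ}

theorem red_sum {m : Type*} [Fintype m]
    (M : m → Matrix (α × (Fin (k + 1) → β)) (α × (Fin (k + 1) → β)) ℂ) (i : Fin (k + 1)) :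
    red k (∑ s, M s) i = ∑ s, red k (M s) i := by
  ext p q
  simp only [red, of_apply, Matrix.sum_apply, Finset.mul_sum]
  exact Finset.sum_comm

theorem red_eq_smul_sum_submatrix
    (M : Matrix (α × (Fin (k + 1) → β)) (α × (Fin (k + 1) → β)) ℂ) (i : Fin (k + 1)) :
    red k M i = (Fintype.card β : ℂ)⁻¹ •
      ∑ f, M.submatrix (fun p => (p.1, Function.update f i p.2))
        (fun p => (p.1, Function.update f i p.2)) := by
  ext p q
  simp [red, Matrix.sum_apply]

theorem Matrix.PosSemidef.red {M : Matrix (α × (Fin (k + 1) → β)) (α × (Fin (k + 1) → β)) ℂ}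
    (hM : M.PosSemidef) (i : Fin (k + 1)) : (red k M i).PosSemidef := by
  rw [red_eq_smul_sum_submatrix]
  exact (posSemidef_sum _ fun f _ => hM.submatrix _).smul (by positivity)

theorem trace_red [Nonempty β]
    (M : Matrix (α × (Fin (k + 1) → β)) (α × (Fin (k + 1) → β)) ℂ) (i : Fin (k + 1)) :
    (red k M i).trace = M.trace := by
  have hβ : (Fintype.card β : ℂ) ≠ 0 := Nat.cast_ne_zero.mpr Fintype.card_ne_zero
  calc (red k M i).trace
      = (Fintype.card β : ℂ)⁻¹ * ∑ a, ∑ t, ∑ f,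
          M (a, Function.update f i t) (a, Function.update f i t) := by
        simp only [trace, diag, red, of_apply, Fintype.sum_prod_type, Finset.mul_sum]
    _ = (Fintype.card β : ℂ)⁻¹ * ∑ a, Fintype.card β • ∑ f, M (a, f) (a, f) := by
        congr 1
        exact Finset.sum_congr rfl fun a _ => Fintype.sum_sum_update (fun f => M (a, f) (a, f)) i
    _ = M.trace := by
        simp only [nsmul_eq_mul, ← Finset.mul_sum, inv_mul_cancel_left₀ hβ, trace, diag,
          Fintype.sum_prod_type]

theorem red_eq_red_of_comp_perm
    {M : Matrix (α × (Fin (k + 1) → β)) (α × (Fin (k + 1) → β)) ℂ}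
    (hM : ∀ (e : Equiv.Perm (Fin (k + 1))) p q,
      M (p.1, p.2 ∘ e) (q.1, q.2 ∘ e) = M p q) (i j : Fin (k + 1)) :
    red k M i = red k M j := by
  ext p q
  simp only [red, of_apply]
  congr 1
  let e := Equiv.swap i j
  have he : Function.Involutive fun f : Fin (k + 1) → β => f ∘ e := fun f => by
    ext
    simp [e]
  refine Fintype.sum_bijective _ he.bijective _ _ fun f => ?_
  have hupd : ∀ t, Function.update (f ∘ e) j t = Function.update f i t ∘ e := fun t => by
    rw [Function.update_comp_equiv]
    simp [e]
  rw [hupd, hupd]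
  exact (hM e _ _).symm

end Reduction

section PureStates

variable {n ι : Type*} [Fintype ι]

theorem trace_vecMulVec_star [Fintype n] (v : n → ℂ) :
    (vecMulVec v (star v)).trace = ((∑ p, Complex.normSq (v p) : ℝ) : ℂ) := by
  simp [trace_vecMulVec, dotProduct, Complex.mul_conj]

theorem sum_sum_vecMulVec_star_apply (v : n → ℂ) (u : ι → n) :
    ∑ a, ∑ b, vecMulVec v (star v) (u a) (u b) = (Complex.normSq (∑ a, v (u a)) : ℂ) := by
  simp [vecMulVec_apply, ← Finset.sum_mul_sum, ← Complex.mul_conj, map_sum]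

end PureStates

section MaximallyEntangled

variable {β R : Type*} [Fintype β] [DecidableEq β] {d k : ℕ}

/-- Pairing of `x` with `∑ a, |a⟩_A |a⟩_{B_i} ⊗ |f⟩`. The value `f i` is ignored, so a sum over
all `f` counts each of these vectors `card β` times. -/
def bellAmp [AddCommMonoid R] (x : β × (Fin (k + 1) → β) → R) (i : Fin (k + 1))
    (f : Fin (k + 1) → β) : R :=
  ∑ a, x (a, Function.update f i a)

theorem trace_mul_phiPlus (N : Matrix (Fin d × Fin d) (Fin d × Fin d) ℂ) :
    (N * phiPlus d).trace = (d : ℂ)⁻¹ * ∑ a, ∑ b, N (a, a) (b, b) := by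
  simp [trace, mul_apply, phiPlus, Fintype.sum_prod_type, ite_and, Finset.mul_sum, mul_comm]

theorem trace_red_mul_phiPlus
    (M : Matrix (Fin d × (Fin (k + 1) → Fin d)) (Fin d × (Fin (k + 1) → Fin d)) ℂ)
    (i : Fin (k + 1)) :
    (red k M i * phiPlus d).trace = ((d : ℂ) ^ 2)⁻¹ *
      ∑ f, ∑ a, ∑ b, M (a, Function.update f i a) (b, Function.update f i b) := by
  calc (red k M i * phiPlus d).trace
      = (d : ℂ)⁻¹ * ∑ a, ∑ b, ((d : ℂ)⁻¹ *
          ∑ f, M (a, Function.update f i a) (b, Function.update f i b)) := by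
        simp only [trace_mul_phiPlus, red, of_apply, Fintype.card_fin]
    _ = ((d : ℂ) ^ 2)⁻¹ *
          ∑ a, ∑ b, ∑ f, M (a, Function.update f i a) (b, Function.update f i b) := by
        simp only [← Finset.mul_sum, ← mul_assoc, ← mul_inv, sq]
    _ = _ := by
        rw [(Finset.sum_congr rfl fun a _ => Finset.sum_comm).trans Finset.sum_comm]

theorem trace_red_vecMulVec_mul_phiPlus (v : Fin d × (Fin (k + 1) → Fin d) → ℂ)
    (i : Fin (k + 1)) :
    (red k (vecMulVec v (star v)) i * phiPlus d).trace =
      (((d : ℝ) ^ 2)⁻¹ * ∑ f, Complex.normSq (bellAmp v i f) : ℝ) := by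
  simp only [trace_red_mul_phiPlus, bellAmp,
    sum_sum_vecMulVec_star_apply v fun a => (a, Function.update _ i a)]
  push_cast
  rfl

end MaximallyEntangled

section CloningBound

variable {β : Type*} [Fintype β] [DecidableEq β] {k : ℕ}

variable (β k) in
def bellVectors : Matrix (Fin (k + 1) × (Fin (k + 1) → β)) (β × (Fin (k + 1) → β)) ℝ :=
  of fun α p => if p.2 = Function.update α.2 α.1 p.1 then 1 else 0

theorem bellVectors_mulVec (w : β × (Fin (k + 1) → β) → ℝ) (i : Fin (k + 1))
    (f : Fin (k + 1) → β) : (bellVectors β k *ᵥ w) (i, f) = bellAmp w i f := by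
  simp [bellVectors, mulVec, dotProduct, Fintype.sum_prod_type, bellAmp]

theorem sum_bellVectors_apply (p : β × (Fin (k + 1) → β)) :
    ∑ α, bellVectors β k α p = ∑ j, if p.2 j = p.1 then (Fintype.card β : ℝ) else 0 := by
  rw [Fintype.sum_prod_type]
  refine Finset.sum_congr rfl fun j _ => ?_
  simp only [bellVectors, of_apply]
  rw [Fintype.sum_update_eq_card_smul (fun f => if p.2 = f then (1 : ℝ) else 0) j p.1,
    Fintype.sum_eq_single p.2 fun f hf => by simp [Ne.symm hf]]
  split_ifs <;> simp_all

theorem sum_bellVectors_mul_transpose_apply (α : Fin (k + 1) × (Fin (k + 1) → β)) :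
    ∑ γ, (bellVectors β k * (bellVectors β k)ᵀ) α γ = Fintype.card β * (Fintype.card β + k) := by
  obtain ⟨i, f⟩ := α
  calc ∑ γ, (bellVectors β k * (bellVectors β k)ᵀ) (i, f) γ
      = (bellVectors β k *ᵥ fun p => ∑ γ, bellVectors β k γ p) (i, f) := by
        simp only [mul_apply, transpose_apply, mulVec, dotProduct, Finset.mul_sum]
        exact Finset.sum_comm
    _ = ∑ j, ∑ a, if Function.update f i a j = a then (Fintype.card β : ℝ) else 0 := by
        simp only [bellVectors_mulVec, bellAmp, sum_bellVectors_apply]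
        exact Finset.sum_comm
    _ = ∑ j, if j = i then (Fintype.card β : ℝ) * Fintype.card β else Fintype.card β := by
        refine Finset.sum_congr rfl fun j _ => ?_
        rcases eq_or_ne j i with rfl | hj
        · simp
        · simp [hj]
    _ = Fintype.card β * (Fintype.card β + k) := by
        rw [Fin.sum_ite_eq_add_mul]
        ring

theorem sum_normSq_bellAmp_le (x : β × (Fin (k + 1) → β) → ℂ) :
    ∑ i, ∑ f, Complex.normSq (bellAmp x i f) ≤
      Fintype.card β * (Fintype.card β + k) * ∑ p, Complex.normSq (x p) := by
  let w := fun p => ‖x p‖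
  have hamp : ∀ i f, Complex.normSq (bellAmp x i f) ≤ bellAmp w i f ^ 2 := fun i f => by
    rw [← Complex.sq_norm]
    gcongr
    exact norm_sum_le _ _
  calc ∑ i, ∑ f, Complex.normSq (bellAmp x i f)
      ≤ ∑ i, ∑ f, bellAmp w i f ^ 2 := by gcongr with i _ f _; exact hamp i f
    _ = bellVectors β k *ᵥ w ⬝ᵥ bellVectors β k *ᵥ w := by
        simp [dotProduct, Fintype.sum_prod_type, bellVectors_mulVec, sq]
    _ ≤ Fintype.card β * (Fintype.card β + k) * (w ⬝ᵥ w) :=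
        mulVec_dotProduct_mulVec_le
          (fun a b => Finset.sum_nonneg fun p _ => by
            simp only [bellVectors, transpose_apply, of_apply]; split_ifs <;> norm_num)
          (by positivity) (fun α => (sum_bellVectors_mul_transpose_apply α).le) w
    _ = Fintype.card β * (Fintype.card β + k) * ∑ p, Complex.normSq (x p) := by
        simp [w, dotProduct, Complex.normSq_eq_norm_sq, sq]

end CloningBound

theorem re_trace_mul_phiPlus_le_of_kExtendible {d k : ℕ} [NeZero d]
    {σ : Matrix (Fin d × Fin d) (Fin d × Fin d) ℂ} (hσ : kExtendible k σ) :
    ((σ * phiPlus d).trace).re ≤ (d + k) / (d * (k + 1)) := by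
  obtain ⟨σ', hσ', htr, hred⟩ := hσ
  obtain ⟨m, v, rfl⟩ := posSemidef_iff_eq_sum_vecMulVec.mp hσ'
  have hnorm : ∑ s, ∑ p, Complex.normSq (v s p) = 1 := by
    simp only [trace_sum, trace_vecMulVec_star] at htr
    exact_mod_cast htr
  have hval : ∀ i, ((σ * phiPlus d).trace).re =
      ((d : ℝ) ^ 2)⁻¹ * ∑ s, ∑ f, Complex.normSq (bellAmp (v s) i f) := fun i => by
    simp only [← hred i, red_sum, Matrix.sum_mul, trace_sum, trace_red_vecMulVec_mul_phiPlus]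
    rw [← Complex.ofReal_sum, Complex.ofReal_re, Finset.mul_sum]
  have hbound : (k + 1) * ((σ * phiPlus d).trace).re ≤ ((d : ℝ) ^ 2)⁻¹ * (d * (d + k)) :=
    calc (k + 1) * ((σ * phiPlus d).trace).re
        = ((d : ℝ) ^ 2)⁻¹ * ∑ s, ∑ i, ∑ f, Complex.normSq (bellAmp (v s) i f) := by
          rw [Finset.sum_comm, Finset.mul_sum]
          simp [← hval]
      _ ≤ ((d : ℝ) ^ 2)⁻¹ * ∑ s, d * (d + k) * ∑ p, Complex.normSq (v s p) := by
          gcongr with s _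
          simpa using sum_normSq_bellAmp_le (v s)
      _ = ((d : ℝ) ^ 2)⁻¹ * (d * (d + k)) := by
          rw [← Finset.mul_sum, hnorm, mul_one]
  have hd : (0 : ℝ) < d := Nat.cast_pos.mpr (NeZero.pos d)
  rw [le_div_iff₀ (by positivity)]
  field_simp at hbound
  nlinarith

section OptimalExtension

variable {d k : ℕ} [NeZero d]

variable (d k) in
/-- `∑_i Φ⁺_{A B_i} ⊗ |0…0⟩` up to normalisation. -/
def symmBellVec : Fin d × (Fin (k + 1) → Fin d) → ℝ :=
  fun p => ∑ i, if p.2 = Pi.single i p.1 then 1 else 0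

theorem symmBellVec_comp_perm (e : Equiv.Perm (Fin (k + 1))) (a : Fin d)
    (b : Fin (k + 1) → Fin d) : symmBellVec d k (a, b ∘ e) = symmBellVec d k (a, b) := by
  have hcomp : ∀ i, b ∘ e = Pi.single i a ↔ b = Pi.single (e i) a := fun i => by
    rw [← Equiv.eq_comp_symm, Pi.single_comp_equiv, Equiv.symm_symm]
  simp only [symmBellVec, hcomp]
  exact Equiv.sum_comp e fun i => if b = Pi.single i a then (1 : ℝ) else 0

theorem sum_sum_ite_eq_or_eq_zero (j : Fin (k + 1)) :
    ∑ a : Fin d, ∑ i, (if i = j ∨ a = 0 then (1 : ℝ) else 0) = d + k := by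
  rw [Finset.sum_comm]
  calc ∑ i, ∑ a : Fin d, (if i = j ∨ a = 0 then (1 : ℝ) else 0)
      = ∑ i, if i = j then (d : ℝ) else 1 := by
        refine Finset.sum_congr rfl fun i _ => ?_
        split_ifs with hi <;> simp [hi]
    _ = d + k := by
        rw [Fin.sum_ite_eq_add_mul, mul_one]

theorem sum_sq_symmBellVec : ∑ p, symmBellVec d k p ^ 2 = (k + 1) * (d + k) := by
  calc ∑ p, symmBellVec d k p ^ 2
      = ∑ a : Fin d, ∑ i, ∑ j, if Pi.single i a = (Pi.single j a : Fin (k + 1) → Fin d)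
          then (1 : ℝ) else 0 := by
        simp only [symmBellVec, sq, Finset.sum_mul_sum, Fintype.sum_prod_type]
        refine Finset.sum_congr rfl fun a _ => ?_
        rw [Finset.sum_comm]
        refine Finset.sum_congr rfl fun i _ => ?_
        rw [Finset.sum_comm]
        simp [Finset.sum_ite_eq', eq_comm]
    _ = ∑ a : Fin d, ∑ i, ∑ j, if i = j ∨ a = 0 then (1 : ℝ) else 0 := by
        simp only [Pi.single_eq_single_iff]
    _ = ∑ j : Fin (k + 1), ∑ a : Fin d, ∑ i, if i = j ∨ a = 0 then (1 : ℝ) else 0 :=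
        (Finset.sum_congr rfl fun a _ => Finset.sum_comm).trans Finset.sum_comm
    _ = (k + 1) * (d + k) := by
        simp only [sum_sum_ite_eq_or_eq_zero, Finset.sum_const, Finset.card_univ,
          Fintype.card_fin, nsmul_eq_mul]
        push_cast
        ring

theorem update_zero_eq_single_iff (f : Fin (k + 1) → Fin d) (a : Fin d) (i : Fin (k + 1)) :
    Function.update f 0 a = Pi.single i a ↔ Function.update f 0 0 = 0 ∧ (i = 0 ∨ a = 0) := by
  constructor
  · intro h
    by_cases hi : i = 0
    · subst hi
      refine ⟨?_, Or.inl rfl⟩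
      rw [← Function.update_idem (a := (0 : Fin (k + 1))) a (0 : Fin d) f, h]
      simp [Pi.single]
    · have ha : a = 0 := by simpa [Pi.single_apply, Ne.symm hi] using congrFun h 0
      subst ha
      exact ⟨by simpa using h, Or.inr rfl⟩
  · rintro ⟨h0, rfl | rfl⟩
    · rw [← Function.update_idem (a := (0 : Fin (k + 1))) (0 : Fin d) a f, h0]
      rfl
    · simpa using h0

theorem bellAmp_symmBellVec (f : Fin (k + 1) → Fin d) :
    bellAmp (symmBellVec d k) 0 f = if Function.update f 0 0 = 0 then (d + k : ℝ) else 0 := by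
  simp only [bellAmp, symmBellVec, update_zero_eq_single_iff, ite_and]
  split_ifs
  · exact sum_sum_ite_eq_or_eq_zero 0
  · simp

theorem sum_sq_bellAmp_symmBellVec :
    ∑ f, bellAmp (symmBellVec d k) 0 f ^ 2 = d * (d + k) ^ 2 := by
  simp only [bellAmp_symmBellVec, ite_pow, zero_pow two_ne_zero]
  rw [Fintype.sum_update_eq_card_smul (fun f => if f = 0 then ((d : ℝ) + k) ^ 2 else 0),
    Fintype.sum_eq_single 0 fun f hf => by simp [hf]]
  simp

variable (d k) in
noncomputable def optimalExtension :
    Matrix (Fin d × (Fin (k + 1) → Fin d)) (Fin d × (Fin (k + 1) → Fin d)) ℂ :=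
  let φ := fun p => ((symmBellVec d k p / √((k + 1) * (d + k)) : ℝ) : ℂ)
  vecMulVec φ (star φ)

theorem trace_optimalExtension : (optimalExtension d k).trace = 1 := by
  have hN : (0 : ℝ) < (k + 1) * (d + k) := by
    have := NeZero.pos d
    positivity
  simp only [optimalExtension, trace_vecMulVec_star, Complex.normSq_ofReal, ← sq, div_pow,
    Real.sq_sqrt hN.le, ← Finset.sum_div, sum_sq_symmBellVec, div_self hN.ne',
    Complex.ofReal_one]

theorem red_optimalExtension (i : Fin (k + 1)) :
    red k (optimalExtension d k) i = red k (optimalExtension d k) 0 := by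
  refine red_eq_red_of_comp_perm (fun e p q => ?_) i 0
  simp [optimalExtension, vecMulVec_apply, symmBellVec_comp_perm]

theorem re_trace_red_optimalExtension_mul_phiPlus :
    ((red k (optimalExtension d k) 0 * phiPlus d).trace).re = (d + k) / (d * (k + 1)) := by
  have hN : (0 : ℝ) < (k + 1) * (d + k) := by
    have := NeZero.pos d
    positivity
  have hamp : ∀ f, Complex.normSq
      (bellAmp (fun p => ((symmBellVec d k p / √((k + 1) * (d + k)) : ℝ) : ℂ)) 0 f) =
      bellAmp (symmBellVec d k) 0 f ^ 2 / ((k + 1) * (d + k)) := fun f => by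
    rw [bellAmp, bellAmp, ← Complex.ofReal_sum, Complex.normSq_ofReal, ← Finset.sum_div,
      div_mul_div_comm, Real.mul_self_sqrt hN.le, sq]
  simp only [optimalExtension, trace_red_vecMulVec_mul_phiPlus, Complex.ofReal_re, hamp,
    ← Finset.sum_div, sum_sq_bellAmp_symmBellVec]
  field_simp

end OptimalExtension

theorem isGreatest_re_trace_mul_phiPlus (d k : ℕ) [NeZero d] :
    IsGreatest {r : ℝ | ∃ σ : Matrix (Fin d × Fin d) (Fin d × Fin d) ℂ,
        σ.PosSemidef ∧ σ.trace = 1 ∧ kExtendible k σ ∧ r = ((σ * phiPlus d).trace).re}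
      ((d + k) / (d * (k + 1))) :=
  ⟨⟨red k (optimalExtension d k) 0, (posSemidef_vecMulVec_self_star _).red 0,
      by rw [trace_red, trace_optimalExtension],
      ⟨_, posSemidef_vecMulVec_self_star _, trace_optimalExtension, red_optimalExtension⟩,
      re_trace_red_optimalExtension_mul_phiPlus.symm⟩,
    fun _ ⟨_, _, _, hσ, hr⟩ => hr ▸ re_trace_mul_phiPlus_le_of_kExtendible hσ⟩

/-- the maximal overlap `tr(σΦ⁺)` of a `k`-extendible two-qubit state σ
with the maximally entangled state equals `(k+2)/(2(k+1))`; for `k = 1` this is `3/4`. -/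
theorem stmt6 (k : ℕ) :
    IsGreatest {r : ℝ | ∃ σ : Matrix (Fin 2 × Fin 2) (Fin 2 × Fin 2) ℂ,
        σ.PosSemidef ∧ σ.trace = 1 ∧ kExtendible k σ ∧ r = ((σ * phiPlus 2).trace).re}
      ((k + 2) / (2 * (k + 1))) ∧
    ((1 + 2 : ℝ) / (2 * (1 + 1)) = 3 / 4) := by
  refine ⟨?_, by norm_num⟩
  simpa [add_comm] using isGreatest_re_trace_mul_phiPlus 2 k
end

section
/- If a density matrix ρ_{AB} is not full rank, then there exist density matrices σ⁽¹⁾ and σ⁽²⁾ on AB (or on AE with E ≅ B) arising as two distinct reductions of a single tripartite state σ_{ABE}, such that tr(ρ σ⁽²⁾) = 0 while tr(ρ σ⁽¹⁾) > 0. -/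
open Matrix ComplexOrder

/-- Reduction of a tripartite state on `A × (B × E)` to `A × B` (tracing out `E`). -/
noncomputable def redAB {A B E : Type*} [Fintype E]
    (σ : Matrix (A × (B × E)) (A × (B × E)) ℂ) : Matrix (A × B) (A × B) ℂ :=
  Matrix.of fun p q => ∑ e, σ (p.1, (p.2, e)) (q.1, (q.2, e))

/-- Reduction of a tripartite state on `A × (B × E)` to `A × E` (tracing out `B`). -/
noncomputable def redAE {A B E : Type*} [Fintype B]
    (σ : Matrix (A × (B × E)) (A × (B × E)) ℂ) : Matrix (A × E) (A × E) ℂ :=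
  Matrix.of fun p q => ∑ b, σ (p.1, (b, p.2)) (q.1, (b, q.2))

/-- Reduction of a tripartite state on `(A × A') × B` to the first `A` copy and `B`. -/
noncomputable def redA0B {A B : Type*} [Fintype A]
    (σ : Matrix ((A × A) × B) ((A × A) × B) ℂ) : Matrix (A × B) (A × B) ℂ :=
  Matrix.of fun p q => ∑ a, σ ((p.1, a), p.2) ((q.1, a), q.2)

/-- Reduction of a tripartite state on `(A × A') × B` to the second `A` copy and `B`. -/
noncomputable def redA1B {A B : Type*} [Fintype A]
    (σ : Matrix ((A × A) × B) ((A × A) × B) ℂ) : Matrix (A × B) (A × B) ℂ :=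
  Matrix.of fun p q => ∑ a, σ ((a, p.1), p.2) ((a, q.1), q.2)

/-! Let `ψ` be the pure state on a kernel vector of `ρ`, read on `A × E` with `E ≅ B`, and `X` its
marginal on `A`. If `ρ` does not annihilate `X ⊗ 1`, the state `ψ_{AE} ⊗ 1_B / d_B` works: its
`AE`-reduction is `ψ`, killed by `ρ`, while its `AB`-reduction `X ⊗ 1 / d_B` is not. Otherwise `ρ`
annihilates `X ⊗ Y` for every `Y`, and `ρ_{A₀B} ⊗ X_{A₁}` works: one reduction is `ρ` itself, with
`tr ρ² > 0`, the other is `X ⊗ ρ_B`. -/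

open scoped Kronecker

namespace Matrix

/- Writing `N = ∑ xᵢ xᵢᴴ`, `tr (M N) = ∑ xᵢᴴ M xᵢ` is a sum of nonnegative terms, and a term
vanishes only when `M xᵢ = 0`. -/
lemma PosSemidef.re_trace_mul_pos {𝕜 n : Type*} [RCLike 𝕜] [Fintype n] {M N : Matrix n n 𝕜}
    (hM : M.PosSemidef) (hN : N.PosSemidef) (h : M * N ≠ 0) : 0 < RCLike.re (M * N).trace := by
  obtain ⟨m, x, rfl⟩ := posSemidef_iff_eq_sum_vecMulVec.mp hN
  simp only [Matrix.mul_sum, mul_vecMulVec, trace_sum, trace_vecMulVec, map_sum] at h ⊢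
  obtain ⟨i, -, hi⟩ := Finset.exists_ne_zero_of_sum_ne_zero h
  have hx : M *ᵥ x i ≠ 0 := fun h0 => hi (by simp [h0])
  refine Finset.sum_pos' (fun j _ => ?_) ⟨i, Finset.mem_univ _, ?_⟩
  · rw [dotProduct_comm]
    exact (RCLike.nonneg_iff.mp (hM.dotProduct_mulVec_nonneg _)).1
  · rw [dotProduct_comm]
    refine (RCLike.pos_iff.mp (lt_of_le_of_ne (hM.dotProduct_mulVec_nonneg _) ?_)).1
    exact fun h0 => hx ((hM.dotProduct_mulVec_zero_iff _).mp h0.symm)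

lemma trace_submatrix_equiv {m n R : Type*} [Fintype m] [Fintype n] [AddCommMonoid R]
    (M : Matrix n n R) (e : m ≃ n) : (M.submatrix e e).trace = M.trace :=
  Fintype.sum_equiv e _ _ fun _ => rfl

lemma PosSemidef.inv_trace_smul {n : Type*} [Fintype n] {M : Matrix n n ℂ} (hM : M.PosSemidef) :
    (M.trace⁻¹ • M).PosSemidef :=
  hM.smul (inv_nonneg_of_nonneg hM.trace_nonneg)

lemma trace_inv_trace_smul {n : Type*} [Fintype n] {M : Matrix n n ℂ} (hM : M.trace ≠ 0) :
    (M.trace⁻¹ • M).trace = 1 := by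
  rw [trace_smul, smul_eq_mul, inv_mul_cancel₀ hM]

lemma exists_posSemidef_trace_eq_one_mul_eq_zero {n : Type*} [Fintype n] {ρ : Matrix n n ℂ}
    {v : n → ℂ} (hv0 : v ≠ 0) (hρv : ρ *ᵥ v = 0) :
    ∃ ψ : Matrix n n ℂ, ψ.PosSemidef ∧ ψ.trace = 1 ∧ ρ * ψ = 0 := by
  have hv : (vecMulVec v (star v)).trace ≠ 0 := by
    rw [trace_vecMulVec, dotProduct_comm]
    exact dotProduct_star_self_eq_zero.not.mpr hv0
  exact ⟨_, (posSemidef_vecMulVec_self_star v).inv_trace_smul, trace_inv_trace_smul hv,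
    by rw [Matrix.mul_smul, mul_vecMulVec, hρv, zero_vecMulVec, smul_zero]⟩

section PartialTrace

variable {R m n : Type*} [AddCommMonoid R]

def traceRight [Fintype n] (M : Matrix (m × n) (m × n) R) : Matrix m m R :=
  of fun i j => ∑ k, M (i, k) (j, k)

def traceLeft [Fintype m] (M : Matrix (m × n) (m × n) R) : Matrix n n R :=
  of fun i j => ∑ k, M (k, i) (k, j)

lemma trace_traceRight [Fintype m] [Fintype n] (M : Matrix (m × n) (m × n) R) :
    (traceRight M).trace = M.trace := by
  simp [trace, traceRight, Fintype.sum_prod_type]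

end PartialTrace

lemma PosSemidef.traceRight {R m n : Type*} [Ring R] [PartialOrder R] [StarRing R]
    [AddLeftMono R] [Fintype n] {M : Matrix (m × n) (m × n) R} (hM : M.PosSemidef) :
    (Matrix.traceRight M).PosSemidef := by
  have hsum : Matrix.traceRight M = ∑ k, M.submatrix (·, k) (·, k) := by
    ext i j
    simp [Matrix.traceRight, Matrix.sum_apply]
  rw [hsum]
  exact posSemidef_sum _ fun k _ => hM.submatrix _

lemma mul_kronecker_eq_zero_of_mul_kronecker_one_eq_zero {R m n : Type*} [CommRing R]
    [Fintype m] [Fintype n] [DecidableEq m] [DecidableEq n] {M : Matrix (m × n) (m × n) R}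
    {X : Matrix m m R} (h : M * (X ⊗ₖ 1) = 0) (Y : Matrix n n R) : M * (X ⊗ₖ Y) = 0 := by
  have hXY : X ⊗ₖ Y = X ⊗ₖ 1 * (1 ⊗ₖ Y) := by
    rw [← mul_kronecker_mul, Matrix.mul_one, Matrix.one_mul]
  rw [hXY, ← Matrix.mul_assoc, h, Matrix.zero_mul]

end Matrix

section Reductions

variable {A B E : Type*}

def prodRegroupAE_B : A × (B × E) ≃ (A × E) × B where
  toFun p := ((p.1, p.2.2), p.2.1)
  invFun q := (q.1.1, (q.2, q.1.2))
  left_inv _ := rfl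
  right_inv _ := rfl

def prodRegroupAB_E : (A × E) × B ≃ (A × B) × E where
  toFun p := ((p.1.1, p.2), p.1.2)
  invFun q := ((q.1.1, q.2), q.1.2)
  left_inv _ := rfl
  right_inv _ := rfl

lemma redAB_submatrix_kronecker [Fintype E] (M : Matrix (A × E) (A × E) ℂ) (N : Matrix B B ℂ) :
    redAB ((M ⊗ₖ N).submatrix prodRegroupAE_B prodRegroupAE_B) = traceRight M ⊗ₖ N := by
  ext p q
  simp [redAB, traceRight, prodRegroupAE_B, Finset.sum_mul]

lemma redAE_submatrix_kronecker [Fintype B] (M : Matrix (A × E) (A × E) ℂ) (N : Matrix B B ℂ) :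
    redAE ((M ⊗ₖ N).submatrix prodRegroupAE_B prodRegroupAE_B) = N.trace • M := by
  ext p q
  simp [redAE, prodRegroupAE_B, trace, Finset.mul_sum, mul_comm]

lemma redA0B_submatrix_kronecker [Fintype A] (M : Matrix (A × B) (A × B) ℂ) (N : Matrix A A ℂ) :
    redA0B ((M ⊗ₖ N).submatrix prodRegroupAB_E prodRegroupAB_E) = N.trace • M := by
  ext p q
  simp [redA0B, prodRegroupAB_E, trace, Finset.mul_sum, mul_comm]

lemma redA1B_submatrix_kronecker [Fintype A] (M : Matrix (A × B) (A × B) ℂ) (N : Matrix A A ℂ) :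
    redA1B ((M ⊗ₖ N).submatrix prodRegroupAB_E prodRegroupAB_E) = N ⊗ₖ traceLeft M := by
  ext p q
  simp [redA1B, traceLeft, prodRegroupAB_E, Finset.mul_sum, mul_comm]

end Reductions

section Extensions

variable {A B : Type*} [Fintype A] [Fintype B] [DecidableEq B]
  {ρ : Matrix (A × B) (A × B) ℂ}

lemma exists_re_trace_redAB_pos_trace_redAE_eq_zero (hρ : ρ.PosSemidef)
    {ψ : Matrix (A × B) (A × B) ℂ} (hψ : ψ.PosSemidef) (hψtr : ψ.trace = 1) (hρψ : ρ * ψ = 0)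
    (h : ρ * (traceRight ψ ⊗ₖ 1) ≠ 0) :
    ∃ σ : Matrix (A × (B × B)) (A × (B × B)) ℂ, σ.PosSemidef ∧ σ.trace = 1 ∧
      0 < ((ρ * redAB σ).trace).re ∧ (ρ * redAE σ).trace = 0 := by
  have : Nonempty B := by
    by_contra hB
    have : IsEmpty B := not_nonempty_iff.mp hB
    exact h (Subsingleton.elim _ _)
  have hB : (1 : Matrix B B ℂ).trace ≠ 0 := by simp
  set τ : Matrix B B ℂ := (1 : Matrix B B ℂ).trace⁻¹ • 1
  have hτ : τ.PosSemidef := PosSemidef.one.inv_trace_smul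
  refine ⟨(ψ ⊗ₖ τ).submatrix prodRegroupAE_B prodRegroupAE_B, (hψ.kronecker hτ).submatrix _,
    ?_, ?_, ?_⟩
  · rw [trace_submatrix_equiv, trace_kronecker, hψtr, trace_inv_trace_smul hB, one_mul]
  · rw [redAB_submatrix_kronecker]
    refine hρ.re_trace_mul_pos (hψ.traceRight.kronecker hτ) ?_
    rw [kronecker_smul, Matrix.mul_smul]
    exact smul_ne_zero (inv_ne_zero hB) h
  · rw [redAE_submatrix_kronecker, trace_inv_trace_smul hB, one_smul, hρψ, trace_zero]

lemma exists_re_trace_redA0B_pos_trace_redA1B_eq_zero [DecidableEq A] (hρ : ρ.PosSemidef)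
    (hρtr : ρ.trace = 1) {X : Matrix A A ℂ} (hX : X.PosSemidef) (hXtr : X.trace = 1)
    (h : ρ * (X ⊗ₖ 1) = 0) :
    ∃ σ : Matrix ((A × A) × B) ((A × A) × B) ℂ, σ.PosSemidef ∧ σ.trace = 1 ∧
      0 < ((ρ * redA0B σ).trace).re ∧ (ρ * redA1B σ).trace = 0 := by
  refine ⟨(ρ ⊗ₖ X).submatrix prodRegroupAB_E prodRegroupAB_E, (hρ.kronecker hX).submatrix _,
    ?_, ?_, ?_⟩
  · rw [trace_submatrix_equiv, trace_kronecker, hρtr, hXtr, one_mul]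
  · rw [redA0B_submatrix_kronecker, hXtr, one_smul]
    refine hρ.re_trace_mul_pos hρ ?_
    have hρ0 : ρᴴ * ρ ≠ 0 := by
      rw [Ne, conjTranspose_mul_self_eq_zero]
      rintro rfl
      simp at hρtr
    rwa [hρ.1.eq] at hρ0
  · rw [redA1B_submatrix_kronecker, mul_kronecker_eq_zero_of_mul_kronecker_one_eq_zero h,
      trace_zero]

end Extensions

/-- if a density matrix `ρ_{AB}` is not of full rank, then there is a
tripartite state with two distinct reductions `σ⁽¹⁾, σ⁽²⁾` on `AB` (with the extending
system `E` a copy of `B`, or alternatively a copy of `A` on Alice's side) such that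
`tr(ρσ⁽²⁾) = 0` while `tr(ρσ⁽¹⁾) > 0`. -/
theorem stmt10 {dA dB : ℕ}
    (ρ : Matrix (Fin dA × Fin dB) (Fin dA × Fin dB) ℂ)
    (hρ : ρ.PosSemidef) (hρtr : ρ.trace = 1)
    (hker : ∃ v : Fin dA × Fin dB → ℂ, v ≠ 0 ∧ ρ.mulVec v = 0) :
    (∃ σ : Matrix (Fin dA × (Fin dB × Fin dB)) (Fin dA × (Fin dB × Fin dB)) ℂ,
        σ.PosSemidef ∧ σ.trace = 1 ∧
        0 < ((ρ * redAB σ).trace).re ∧ (ρ * redAE σ).trace = 0) ∨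
    (∃ σ : Matrix ((Fin dA × Fin dA) × Fin dB) ((Fin dA × Fin dA) × Fin dB) ℂ,
        σ.PosSemidef ∧ σ.trace = 1 ∧
        0 < ((ρ * redA0B σ).trace).re ∧ (ρ * redA1B σ).trace = 0) := by
  obtain ⟨v, hv0, hρv⟩ := hker
  obtain ⟨ψ, hψ, hψtr, hρψ⟩ := exists_posSemidef_trace_eq_one_mul_eq_zero hv0 hρv
  by_cases h : ρ * (traceRight ψ ⊗ₖ 1) = 0
  · exact .inr <| exists_re_trace_redA0B_pos_trace_redA1B_eq_zero hρ hρtr hψ.traceRight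
      ((trace_traceRight ψ).trans hψtr) h
  · exact .inl <| exists_re_trace_redAB_pos_trace_redAE_eq_zero hρ hψ hψtr hρψ h
end
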